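/- arXiv:1010.3367 — 2 statements merged into one kernel-verified Lean document; each statement's English description precedes it below -/
import Mathlib

section
/- Let α > 0 be a real number and let T ≥ 10 and t > 0 be integers such that 6α·log(20T) ≤ t ≤ T (natural logarithm). Let H be a finite simple bipartite graph of maximum degree Δ(H) ≥ 2T with bipartition V(H) = A ∪ B such that every vertex of A has degree between t and T, and every vertex of B has degree at least Δ(H)/2. Then H is not α-log-sparse; that is, H contains a subgraph H'' with at least one edge whose average degree 2|E(H'')|/|V(H'')| exceeds α·log(Δ(H'')). -/
noncomputable def maxDeg {V : Type*} [Fintype V] (G : SimpleGraph V) : ℕ := by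
  classical exact G.maxDegree

noncomputable def deg {V : Type*} [Fintype V] (G : SimpleGraph V) (v : V) : ℕ := by
  classical exact G.degree v

open Finset SimpleGraph

/-!
Choose a maximal `S ⊆ A` in which no vertex has more than `C = (20T)²` neighbours, and keep only
the edges of `H` at `S`. Every vertex of `A \ S` is adjacent to one of the at most `T|S|/C`
vertices with `C` neighbours in `S`, so `|A| ≤ |S| + ΔT|S|/C`; combined with `Δ|B| ≤ 2T|A|` and
`Δ ≥ 2T` this gives `|B| ≤ 2|S|`. The subgraph kept has maximum degree at most `C`, at least
`t|S|` edges and at most `3|S|` vertices, so its average degree is at least `2t/3`, while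
`α log C = 2α log (20T) ≤ t/3`.
-/

lemma deg_eq_degree {V : Type*} [Fintype V] (G : SimpleGraph V) (v : V)
    [Fintype (G.neighborSet v)] : deg G v = G.degree v := by
  unfold deg; congr!

lemma maxDeg_eq_maxDegree {V : Type*} [Fintype V] (G : SimpleGraph V) [DecidableRel G.Adj] :
    maxDeg G = G.maxDegree := by
  unfold maxDeg; congr!

theorem Finset.exists_subset_forall_card_bipartiteAbove_le {α β : Type*} [DecidableEq β]
    (r : α → β → Prop) [∀ a b, Decidable (r a b)] (s : Finset β) (C : ℕ) :
    ∃ s' ⊆ s, (∀ a, #(s'.bipartiteAbove r a) ≤ C) ∧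
      ∀ b ∈ s \ s', ∃ a, r a b ∧ C ≤ #(s'.bipartiteAbove r a) := by
  classical
  obtain ⟨s', hs', hmax⟩ := exists_max_image
    {u ∈ s.powerset | ∀ a, #(u.bipartiteAbove r a) ≤ C} card
    ⟨∅, mem_filter.2 ⟨empty_mem_powerset s, fun a => by simp [bipartiteAbove]⟩⟩
  simp only [mem_filter, mem_powerset] at hs' hmax
  refine ⟨s', hs'.1, hs'.2, fun b hb => ?_⟩
  rw [mem_sdiff] at hb
  have hlarge : ¬ ∀ a, #((insert b s').bipartiteAbove r a) ≤ C := fun hcap => by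
    have := hmax _ ⟨insert_subset hb.1 hs'.1, hcap⟩
    rw [card_insert_of_notMem hb.2] at this
    omega
  simp only [not_forall, not_le] at hlarge
  obtain ⟨a, ha⟩ := hlarge
  by_cases hab : r a b
  · refine ⟨a, hab, ?_⟩
    rw [bipartiteAbove, filter_insert, if_pos hab] at ha
    exact Nat.lt_succ_iff.mp (ha.trans_le (card_insert_le _ _))
  · rw [bipartiteAbove, filter_insert, if_neg hab] at ha
    exact absurd (hs'.2 a) ha.not_ge

namespace SimpleGraph

variable {V : Type*} {G : SimpleGraph V}

lemma IsBipartiteWith.between_of_subset {s t s' : Set V} (h : G.IsBipartiteWith s t)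
    (hs' : s' ⊆ s) : (G.between s' t).IsBipartiteWith s' t :=
  between_isBipartiteWith (h.disjoint.mono_left hs')

variable [Fintype V]

lemma IsBipartiteWith.ncard_support_le {s t : Finset V} (h : G.IsBipartiteWith s t) :
    G.support.ncard ≤ #s + #t :=
  calc G.support.ncard ≤ ((s : Set V) ∪ t).ncard :=
        Set.ncard_le_ncard (isBipartiteWith_support_subset h)
    _ ≤ #s + #t := by simpa only [Set.ncard_coe_finset] using Set.ncard_union_le (s : Set V) t

variable [DecidableRel G.Adj]

lemma card_bipartiteAbove_adj_le_degree (s : Finset V) (v : V) :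
    #(s.bipartiteAbove G.Adj v) ≤ G.degree v := by
  rw [← card_neighborFinset_eq_degree]
  exact card_le_card fun w hw => (mem_neighborFinset ..).2 (mem_filter.1 hw).2

lemma card_bipartiteBelow_adj_le_degree (s : Finset V) (v : V) :
    #(s.bipartiteBelow G.Adj v) ≤ G.degree v := by
  rw [← card_neighborFinset_eq_degree]
  exact card_le_card fun w hw => (mem_neighborFinset ..).2 (mem_filter.1 hw).2.symm

theorem card_le_card_mul_maxDegree {s D : Finset V} (hD : ∀ v ∈ s, ∃ w ∈ D, G.Adj w v) :
    #s ≤ #D * G.maxDegree := by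
  simpa using card_mul_le_card_mul' G.Adj
    (fun v hv => one_le_card.2 <| by simpa [bipartiteBelow, Finset.Nonempty] using hD v hv)
    (fun w _ => (card_bipartiteAbove_adj_le_degree s w).trans (G.degree_le_maxDegree w))

theorem IsBipartiteWith.maxDegree_mul_card_le {s t : Finset V} {T : ℕ}
    (h : G.IsBipartiteWith s t) (hs : ∀ v ∈ s, G.degree v ≤ T)
    (ht : ∀ w ∈ t, G.maxDegree ≤ 2 * G.degree w) :
    G.maxDegree * #t ≤ 2 * T * #s :=
  calc G.maxDegree * #t = ∑ _w ∈ t, G.maxDegree := by rw [sum_const, smul_eq_mul, mul_comm]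
    _ ≤ ∑ w ∈ t, 2 * G.degree w := sum_le_sum ht
    _ = 2 * ∑ v ∈ s, G.degree v := by rw [← mul_sum, isBipartiteWith_sum_degrees_eq h]
    _ ≤ 2 * ∑ _v ∈ s, T := Nat.mul_le_mul_left 2 (sum_le_sum hs)
    _ = 2 * T * #s := by rw [sum_const, smul_eq_mul]; ring

variable [DecidableEq V] {s t s' : Finset V} {v : V}

/-- The vertices with at least `C` neighbours in `s'` dominate `s \ s'`, and double counting
shows there are at most `T * #s' / C` of them. -/
theorem IsBipartiteWith.mul_card_le_of_forall_blocked {T C : ℕ} (h : G.IsBipartiteWith s t)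
    (hT : 0 < T) (hΔ : 2 * T ≤ G.maxDegree) (hs : ∀ v ∈ s, G.degree v ≤ T)
    (ht : ∀ w ∈ t, G.maxDegree ≤ 2 * G.degree w) (hs' : s' ⊆ s)
    (hblock : ∀ v ∈ s \ s', ∃ w, G.Adj w v ∧ C ≤ #(s'.bipartiteAbove G.Adj w)) :
    C * #t ≤ (C + 2 * T ^ 2) * #s' := by
  set D : Finset V := {w | C ≤ #(s'.bipartiteAbove G.Adj w)}
  have hD : #D * C ≤ #s' * T := card_mul_le_card_mul G.Adj (fun w hw => (mem_filter.1 hw).2)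
    fun v hv => (card_bipartiteBelow_adj_le_degree D v).trans (hs v (hs' hv))
  have hsD : #(s \ s') ≤ #D * G.maxDegree := card_le_card_mul_maxDegree fun v hv => by
    obtain ⟨w, hwv, hw⟩ := hblock v hv
    exact ⟨w, mem_filter.2 ⟨mem_univ w, hw⟩, hwv⟩
  have hst := h.maxDegree_mul_card_le hs ht
  rw [← card_sdiff_add_card_eq_card hs'] at hst
  refine Nat.le_of_mul_le_mul_left ?_ (hT.trans_le (by omega) : 0 < G.maxDegree)
  calc G.maxDegree * (C * #t) = C * (G.maxDegree * #t) := by ring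
    _ ≤ C * (2 * T * (#(s \ s') + #s')) := Nat.mul_le_mul_left C hst
    _ ≤ 2 * T * G.maxDegree * (#D * C) + 2 * T * C * #s' := by
      have := Nat.mul_le_mul_left (2 * T * C) hsD
      linarith
    _ ≤ 2 * T * G.maxDegree * (#s' * T) + G.maxDegree * C * #s' := by gcongr
    _ = G.maxDegree * ((C + 2 * T ^ 2) * #s') := by ring

lemma degree_between_of_mem (h : G.IsBipartiteWith s t) (hs' : s' ⊆ s) (hv : v ∈ s') :
    (G.between s' t).degree v = G.degree v := by
  simp_rw [← card_neighborFinset_eq_degree]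
  congr 1
  ext w
  simp only [mem_neighborFinset, between_adj, and_iff_left_iff_imp]
  exact fun hvw => Or.inl ⟨hv, h.mem_of_mem_adj (hs' hv) hvw⟩

lemma degree_between_le_card_bipartiteAbove (hv : v ∉ s') :
    (G.between s' t).degree v ≤ #(s'.bipartiteAbove G.Adj v) := by
  rw [← card_neighborFinset_eq_degree]
  refine card_le_card fun w hw => ?_
  simp only [mem_neighborFinset, between_adj] at hw
  simp only [bipartiteAbove, mem_filter]
  tauto

lemma card_edgeFinset_between (h : G.IsBipartiteWith s t) (hs' : s' ⊆ s) :
    #(G.between s' t).edgeFinset = ∑ v ∈ s', G.degree v := by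
  rw [← isBipartiteWith_sum_degrees_eq_card_edges (h.between_of_subset (coe_subset.2 hs'))]
  exact sum_congr rfl fun v hv => degree_between_of_mem h hs' hv

lemma IsBipartiteWith.mul_card_le_card_edgeFinset_between {k : ℕ} (h : G.IsBipartiteWith s t)
    (hs' : s' ⊆ s) (hk : ∀ v ∈ s', k ≤ G.degree v) :
    k * #s' ≤ #(G.between s' t).edgeFinset := by
  rw [card_edgeFinset_between h hs']
  simpa [mul_comm] using card_nsmul_le_sum s' _ k hk

theorem IsBipartiteWith.exists_between_maxDegree_le {T C : ℕ} (h : G.IsBipartiteWith s t)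
    (hT : 0 < T) (hTC : 2 * T ^ 2 ≤ C) (hΔ : 2 * T ≤ G.maxDegree)
    (hs : ∀ v ∈ s, G.degree v ≤ T) (ht : ∀ w ∈ t, G.maxDegree ≤ 2 * G.degree w) :
    ∃ s' ⊆ s, s'.Nonempty ∧ (G.between s' t).support.ncard ≤ 3 * #s' ∧
      (G.between s' t).maxDegree ≤ C := by
  obtain ⟨s', hs's, hcap, hblock⟩ := exists_subset_forall_card_bipartiteAbove_le G.Adj s C
  have hCt := h.mul_card_le_of_forall_blocked hT hΔ hs ht hs's hblock
  have hC : 0 < C := by nlinarith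
  have htne : t.Nonempty := by
    obtain ⟨u, v, huv⟩ :=
      ne_bot_iff_exists_adj.1 ((maxDegree_eq_zero_iff (G := G)).not.1 (by omega))
    rcases h.mem_of_adj huv with ⟨-, hv⟩ | ⟨hu, -⟩
    exacts [⟨v, hv⟩, ⟨u, hu⟩]
  have hts : #t ≤ 2 * #s' := Nat.le_of_mul_le_mul_left (by nlinarith) hC
  have hsupp := (h.between_of_subset (coe_subset.2 hs's)).ncard_support_le
  refine ⟨s', hs's, card_pos.1 ?_, by omega, maxDegree_le_of_forall_degree_le _ _ fun v => ?_⟩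
  · by_contra! h0
    rw [nonpos_iff_eq_zero.1 h0, mul_zero] at hCt
    exact (Nat.mul_pos hC (card_pos.2 htne)).not_ge hCt
  · by_cases hv : v ∈ s'
    · rw [degree_between_of_mem h hs's hv]
      nlinarith [hs v (hs's hv)]
    · exact (degree_between_le_card_bipartiteAbove hv).trans (hcap v)

end SimpleGraph

lemma mul_log_lt_two_mul_div {α : ℝ} {T t m e n s : ℕ} (hα : 0 < α) (ht : 0 < t)
    (htl : 6 * α * Real.log (20 * T) ≤ t) (hm : 0 < m) (hmT : m ≤ (20 * T) ^ 2)
    (he : t * s ≤ e) (hn : 0 < n) (hns : n ≤ 3 * s) :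
    α * Real.log m < 2 * e / n := by
  have hlog : α * Real.log m ≤ t / 3 :=
    calc α * Real.log m ≤ α * Real.log (((20 * T) ^ 2 : ℕ) : ℝ) := by gcongr
      _ = 2 * α * Real.log (20 * T) := by push_cast; rw [Real.log_pow]; ring
      _ ≤ t / 3 := by linarith
  have he' : (t : ℝ) * s ≤ e := by exact_mod_cast he
  have hns' : (n : ℝ) ≤ 3 * s := by exact_mod_cast hns
  have hts : (0 : ℝ) < t * s := by
    have : 0 < s := by omega
    positivity
  rw [lt_div_iff₀ (by positivity)]
  nlinarith

theorem stmt11_general {V : Type*} [Fintype V]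
    (α : ℝ) (hα : 0 < α) (T t : ℕ) (ht : 0 < t)
    (htl : 6 * α * Real.log (20 * T) ≤ (t : ℝ)) (htT : t ≤ T)
    (H : SimpleGraph V) (A B : Set V)
    (hdisj : Disjoint A B)
    (hbip : ∀ u v : V, H.Adj u v → (u ∈ A ∧ v ∈ B) ∨ (u ∈ B ∧ v ∈ A))
    (hΔ : 2 * T ≤ maxDeg H)
    (hA : ∀ v ∈ A, t ≤ deg H v ∧ deg H v ≤ T)
    (hB : ∀ v ∈ B, (maxDeg H : ℝ) / 2 ≤ (deg H v : ℝ)) :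
    ∃ H'' : SimpleGraph V, H'' ≤ H ∧ H''.edgeSet.Nonempty ∧
      α * Real.log (maxDeg H'') <
        2 * (Nat.card H''.edgeSet : ℝ) / (Nat.card H''.support : ℝ) := by
  classical
  rw [maxDeg_eq_maxDegree] at hΔ hB
  have hbw : H.IsBipartiteWith ↑A.toFinset ↑B.toFinset := by
    simpa using (⟨hdisj, fun u v huv => hbip u v huv⟩ : H.IsBipartiteWith A B)
  have hAdeg : ∀ v ∈ A.toFinset, t ≤ H.degree v ∧ H.degree v ≤ T := by
    simpa [deg_eq_degree] using hA
  have hBdeg : ∀ v ∈ B.toFinset, H.maxDegree ≤ 2 * H.degree v := fun v hv => by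
    have := hB v (Set.mem_toFinset.1 hv)
    rw [deg_eq_degree] at this
    exact_mod_cast (by linarith : (H.maxDegree : ℝ) ≤ 2 * H.degree v)
  obtain ⟨S, hSA, ⟨a, ha⟩, hsupp, hmax⟩ := hbw.exists_between_maxDegree_le (C := (20 * T) ^ 2)
    (ht.trans_le htT) (by nlinarith) hΔ (fun v hv => (hAdeg v hv).2) hBdeg
  set H'' := H.between ↑S ↑B.toFinset
  have hE := hbw.mul_card_le_card_edgeFinset_between hSA fun v hv => (hAdeg v (hSA hv)).1
  have ha_pos : 0 < H''.degree a := by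
    rw [degree_between_of_mem hbw hSA ha]
    exact ht.trans_le (hAdeg a (hSA ha)).1
  refine ⟨H'', between_le, ?_, ?_⟩
  · obtain ⟨b, hab⟩ := (H''.degree_pos_iff_exists_adj a).1 ha_pos
    exact ⟨s(a, b), hab⟩
  · rw [maxDeg_eq_maxDegree, Nat.card_eq_fintype_card (α := H''.edgeSet), ← edgeFinset_card,
      Nat.card_coe_set_eq]
    exact mul_log_lt_two_mul_div hα ht htl (ha_pos.trans_le (H''.degree_le_maxDegree a)) hmax hE
      ((Set.ncard_pos (Set.toFinite _)).2 ⟨a, (H''.degree_pos_iff_mem_support a).1 ha_pos⟩) hsupp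

/-- A bipartite graph whose A-side degrees lie between t and T and whose B-side degrees
are at least Δ(H)/2, with Δ(H) ≥ 2T, T ≥ 10 and 6α·log(20T) ≤ t ≤ T, is not α-log-sparse:
it contains a subgraph with at least one edge whose average degree exceeds α·log of its
maximum degree. -/
theorem stmt11 {V : Type*} [Fintype V] [DecidableEq V]
    (α : ℝ) (hα : 0 < α) (T t : ℕ) (hT : 10 ≤ T) (ht : 0 < t)
    (htl : 6 * α * Real.log (20 * T) ≤ (t : ℝ)) (htT : t ≤ T)
    (H : SimpleGraph V) (A B : Set V)
    (hcover : A ∪ B = Set.univ) (hdisj : Disjoint A B)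
    (hbip : ∀ u v : V, H.Adj u v → (u ∈ A ∧ v ∈ B) ∨ (u ∈ B ∧ v ∈ A))
    (hΔ : 2 * T ≤ maxDeg H)
    (hA : ∀ v ∈ A, t ≤ deg H v ∧ deg H v ≤ T)
    (hB : ∀ v ∈ B, (maxDeg H : ℝ) / 2 ≤ (deg H v : ℝ)) :
    ∃ H'' : SimpleGraph V, H'' ≤ H ∧ H''.edgeSet.Nonempty ∧
      α * Real.log (maxDeg H'') <
        2 * (Nat.card H''.edgeSet : ℝ) / (Nat.card H''.support : ℝ) :=
  stmt11_general α hα T t ht htl htT H A B hdisj hbip hΔ hA hB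
end

section
/- Let H be a finite simple bipartite graph with bipartition V(H) = A ∪ B and maximum degree D such that every vertex of A has degree at most D/2, and let c > 0 be a real number. Then the edge set of H can be partitioned into three subgraphs H₀, H₁, H₂ such that: every vertex of V(H₀) ∩ B has degree at least D/2 in H₀; every vertex of V(H₀) ∩ A has degree at least c in H₀; H₁ is c-degenerate; and Δ(H₂) ≤ D/2. -/
/-- G is c-degenerate (real threshold c): every subgraph has a vertex of degree ≤ c. -/
def DegenR {V : Type*} (c : ℝ) (G : SimpleGraph V) : Prop :=
  ∀ s : Finset V, s.Nonempty → ∃ v ∈ s, (({u | u ∈ s ∧ G.Adj v u} : Set V).ncard : ℝ) ≤ c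

/-! Peel the graph greedily: as long as some non-isolated vertex of `A` has degree less than `c`,
or some non-isolated vertex of `B` has degree less than `D/2`, move all edges at that vertex into
`H₁`, respectively `H₂`, and delete them. Since `A` and `B` are independent, a star at a vertex of
one side adds no degree at the other vertices of that side, so `H₁` has degree at most `c` on `A`
and `H₂` degree at most `D/2` on `B`. Every edge of `H₁` has an endpoint in `A`, which makes `H₁`
`c`-degenerate, and on `A` the degree of `H₂` is bounded by that of `H`, at most `D/2`. The graph
left when the process stops is `H₀`: there, by the stopping rule, every non-isolated vertex meets
its degree threshold. -/

namespace SimpleGraph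

variable {V : Type*}

lemma sdiff_deleteIncidenceSet_adj {G : SimpleGraph V} {v x y : V} :
    (G \ G.deleteIncidenceSet v).Adj x y ↔ G.Adj x y ∧ (x = v ∨ y = v) := by
  simp only [sdiff_adj, deleteIncidenceSet_adj]
  tauto

lemma notMem_support_deleteIncidenceSet (G : SimpleGraph V) (v : V) :
    v ∉ (G.deleteIncidenceSet v).support := fun hv =>
  (support_deleteIncidenceSet_subset G v hv).2 rfl

lemma IsBipartiteWith.mono {G G' : SimpleGraph V} {A B : Set V} (hG : G.IsBipartiteWith A B)
    (h : G' ≤ G) : G'.IsBipartiteWith A B :=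
  ⟨hG.disjoint, fun _ _ hadj => hG.mem_of_adj (h hadj)⟩

end SimpleGraph

open SimpleGraph

section Degree

variable {V : Type*} [Fintype V]

lemma deg_eq_ncard (G : SimpleGraph V) (v : V) : deg G v = (G.neighborSet v).ncard := by
  classical
  simp [deg, degree, neighborFinset, Set.ncard_eq_toFinset_card']

lemma deg_mono {G G' : SimpleGraph V} (h : G ≤ G') (v : V) : deg G v ≤ deg G' v := by
  rw [deg_eq_ncard, deg_eq_ncard]
  exact Set.ncard_le_ncard (fun _ hu => h hu)

lemma deg_sup_le (G G' : SimpleGraph V) (v : V) : deg (G ⊔ G') v ≤ deg G v + deg G' v := by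
  rw [deg_eq_ncard, deg_eq_ncard, deg_eq_ncard, neighborSet_sup]
  exact Set.ncard_union_le _ _

lemma deg_eq_zero_of_notMem_support {G : SimpleGraph V} {v : V} (hv : v ∉ G.support) :
    deg G v = 0 := by
  rw [deg_eq_ncard, Set.ncard_eq_zero]
  exact Set.eq_empty_of_forall_notMem fun w hw => hv ⟨w, hw⟩

lemma maxDeg_le_of_forall_deg_le {G : SimpleGraph V} {t : ℝ} (ht : 0 ≤ t)
    (h : ∀ v, (deg G v : ℝ) ≤ t) : (maxDeg G : ℝ) ≤ t := by
  classical
  have : maxDeg G ≤ ⌊t⌋₊ :=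
    maxDegree_le_of_forall_degree_le G _ fun v => Nat.le_floor (h v)
  exact (Nat.cast_le.2 this).trans (Nat.floor_le ht)

lemma degenR_of_isBipartiteWith {G : SimpleGraph V} {A B : Set V} {c : ℝ}
    (hG : G.IsBipartiteWith A B) (hc : 0 ≤ c) (hdeg : ∀ v ∈ A, (deg G v : ℝ) ≤ c) :
    DegenR c G := by
  intro s ⟨v, hv⟩
  by_cases hsA : ∃ a ∈ s, a ∈ A
  · obtain ⟨a, has, haA⟩ := hsA
    refine ⟨a, has, le_trans ?_ (hdeg a haA)⟩
    rw [deg_eq_ncard]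
    exact_mod_cast Set.ncard_le_ncard (t := G.neighborSet a) fun _ (hu : _ ∧ _) => hu.2
  · push Not at hsA
    have hempty : ({u | u ∈ s ∧ G.Adj v u} : Set V) = ∅ := by
      refine Set.eq_empty_of_forall_notMem fun u ⟨hus, hadj⟩ => ?_
      rcases hG.mem_of_adj hadj with ⟨hvA, -⟩ | ⟨-, huA⟩
      exacts [hsA v hv hvA, hsA u hus huA]
    exact ⟨v, hv, by simp [hempty, hc]⟩

end Degree

section CoreDecomposition

variable {V : Type*} [Fintype V] {A B : Set V} {c d : ℝ} {G G₀ G₁ G₂ : SimpleGraph V}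

structure IsCoreDecomposition (A B : Set V) (c d : ℝ) (G G₀ G₁ G₂ : SimpleGraph V) : Prop where
  sup_eq : G₀ ⊔ G₁ ⊔ G₂ = G
  disjoint₀₁ : Disjoint G₀ G₁
  disjoint₀₂ : Disjoint G₀ G₂
  disjoint₁₂ : Disjoint G₁ G₂
  le_deg₀_of_mem_left : ∀ v ∈ A, v ∈ G₀.support → c ≤ deg G₀ v
  le_deg₀_of_mem_right : ∀ v ∈ B, v ∈ G₀.support → d ≤ deg G₀ v
  deg₁_le : ∀ v ∈ A, (deg G₁ v : ℝ) ≤ c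
  deg₂_le : ∀ v ∈ B, (deg G₂ v : ℝ) ≤ d

namespace IsCoreDecomposition

lemma le₀ (h : IsCoreDecomposition A B c d G G₀ G₁ G₂) : G₀ ≤ G :=
  h.sup_eq ▸ le_sup_left.trans le_sup_left

lemma le₁ (h : IsCoreDecomposition A B c d G G₀ G₁ G₂) : G₁ ≤ G :=
  h.sup_eq ▸ le_sup_right.trans le_sup_left

lemma le₂ (h : IsCoreDecomposition A B c d G G₀ G₁ G₂) : G₂ ≤ G :=
  h.sup_eq ▸ le_sup_right

lemma symm (h : IsCoreDecomposition A B c d G G₀ G₁ G₂) :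
    IsCoreDecomposition B A d c G G₀ G₂ G₁ where
  sup_eq := sup_right_comm G₀ G₂ G₁ ▸ h.sup_eq
  disjoint₀₁ := h.disjoint₀₂
  disjoint₀₂ := h.disjoint₀₁
  disjoint₁₂ := h.disjoint₁₂.symm
  le_deg₀_of_mem_left := h.le_deg₀_of_mem_right
  le_deg₀_of_mem_right := h.le_deg₀_of_mem_left
  deg₁_le := h.deg₂_le
  deg₂_le := h.deg₁_le

end IsCoreDecomposition

lemma isCoreDecomposition_self (hc : 0 ≤ c) (hd : 0 ≤ d)
    (hA : ∀ v ∈ A, v ∈ G.support → c ≤ deg G v) (hB : ∀ v ∈ B, v ∈ G.support → d ≤ deg G v) :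
    IsCoreDecomposition A B c d G G ⊥ ⊥ where
  sup_eq := by simp
  disjoint₀₁ := disjoint_bot_right
  disjoint₀₂ := disjoint_bot_right
  disjoint₁₂ := disjoint_bot_right
  le_deg₀_of_mem_left := hA
  le_deg₀_of_mem_right := hB
  deg₁_le _ _ := by simpa [deg_eq_ncard] using hc
  deg₂_le _ _ := by simpa [deg_eq_ncard] using hd

lemma IsCoreDecomposition.peel_left {v : V} (hG : G.IsBipartiteWith A B) (hvA : v ∈ A)
    (hdeg : (deg G v : ℝ) ≤ c)
    (h : IsCoreDecomposition A B c d (G.deleteIncidenceSet v) G₀ G₁ G₂) :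
    IsCoreDecomposition A B c d G G₀ (G \ G.deleteIncidenceSet v ⊔ G₁) G₂ where
  sup_eq := by
    calc G₀ ⊔ (G \ G.deleteIncidenceSet v ⊔ G₁) ⊔ G₂
        = G \ G.deleteIncidenceSet v ⊔ (G₀ ⊔ G₁ ⊔ G₂) := by ac_rfl
      _ = G := by rw [h.sup_eq, sdiff_sup_cancel (G.deleteIncidenceSet_le v)]
  disjoint₀₁ := disjoint_sup_right.2 ⟨(disjoint_sdiff_self_left.mono_right h.le₀).symm,
    h.disjoint₀₁⟩
  disjoint₀₂ := h.disjoint₀₂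
  disjoint₁₂ := disjoint_sup_left.2 ⟨disjoint_sdiff_self_left.mono_right h.le₂, h.disjoint₁₂⟩
  le_deg₀_of_mem_left := h.le_deg₀_of_mem_left
  le_deg₀_of_mem_right := h.le_deg₀_of_mem_right
  deg₁_le x hxA := by
    have hsup : (deg (G \ G.deleteIncidenceSet v ⊔ G₁) x : ℝ) ≤
        deg (G \ G.deleteIncidenceSet v) x + deg G₁ x := by exact_mod_cast deg_sup_le _ _ x
    refine hsup.trans ?_
    rcases eq_or_ne x v with rfl | hxv
    · have hG₁ : deg G₁ x = 0 := deg_eq_zero_of_notMem_support fun hx =>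
        notMem_support_deleteIncidenceSet G x (support_mono h.le₁ hx)
      have hstar : deg (G \ G.deleteIncidenceSet x) x ≤ deg G x := deg_mono sdiff_le x
      rw [hG₁, Nat.cast_zero, add_zero]
      exact (Nat.cast_le.2 hstar).trans hdeg
    · have hstar : deg (G \ G.deleteIncidenceSet v) x = 0 := by
        refine deg_eq_zero_of_notMem_support fun ⟨y, hxy⟩ => ?_
        obtain ⟨hadj, rfl | rfl⟩ := sdiff_deleteIncidenceSet_adj.1 hxy
        · exact hxv rfl
        · exact Set.disjoint_left.1 hG.disjoint hvA (hG.mem_of_mem_adj hxA hadj)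
      rw [hstar, Nat.cast_zero, zero_add]
      exact h.deg₁_le x hxA
  deg₂_le := h.deg₂_le

lemma IsCoreDecomposition.peel_right {v : V} (hG : G.IsBipartiteWith A B) (hvB : v ∈ B)
    (hdeg : (deg G v : ℝ) ≤ d)
    (h : IsCoreDecomposition A B c d (G.deleteIncidenceSet v) G₀ G₁ G₂) :
    IsCoreDecomposition A B c d G G₀ G₁ (G \ G.deleteIncidenceSet v ⊔ G₂) :=
  (h.symm.peel_left hG.symm hvB hdeg).symm

theorem exists_isCoreDecomposition (hc : 0 ≤ c) (hd : 0 ≤ d) (G : SimpleGraph V)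
    (hG : G.IsBipartiteWith A B) : ∃ G₀ G₁ G₂, IsCoreDecomposition A B c d G G₀ G₁ G₂ := by
  induction hn : G.support.ncard using Nat.strong_induction_on generalizing G with
  | _ n ih =>
  by_cases hlow : ∃ v ∈ G.support, v ∈ A ∧ (deg G v : ℝ) < c ∨ v ∈ B ∧ (deg G v : ℝ) < d
  · obtain ⟨v, hvG, hv⟩ := hlow
    have hlt : (G.deleteIncidenceSet v).support.ncard < n :=
      hn ▸ Set.ncard_lt_ncard ((support_deleteIncidenceSet_subset G v).trans_ssubset
        (Set.sdiff_singleton_ssubset.2 hvG))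
    obtain ⟨G₀, G₁, G₂, h⟩ := ih _ hlt _ (hG.mono (G.deleteIncidenceSet_le v)) rfl
    rcases hv with ⟨hvA, hdeg⟩ | ⟨hvB, hdeg⟩
    · exact ⟨_, _, _, h.peel_left hG hvA hdeg.le⟩
    · exact ⟨_, _, _, h.peel_right hG hvB hdeg.le⟩
  · push Not at hlow
    exact ⟨G, ⊥, ⊥, isCoreDecomposition_self hc hd (fun v hvA hvG => (hlow v hvG).1 hvA)
      (fun v hvB hvG => (hlow v hvG).2 hvB)⟩

end CoreDecomposition

theorem stmt13_general {V : Type*} [Fintype V] (H : SimpleGraph V) (A B : Set V)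
    (hdisj : Disjoint A B)
    (hbip : ∀ u v : V, H.Adj u v → (u ∈ A ∧ v ∈ B) ∨ (u ∈ B ∧ v ∈ A))
    (D : ℕ)
    (hA : ∀ v ∈ A, (deg H v : ℝ) ≤ (D : ℝ) / 2)
    (c : ℝ) (hc : 0 < c) :
    ∃ H₀ H₁ H₂ : SimpleGraph V,
      H₀ ⊔ H₁ ⊔ H₂ = H ∧
      Disjoint H₀ H₁ ∧ Disjoint H₀ H₂ ∧ Disjoint H₁ H₂ ∧
      (∀ v ∈ B, v ∈ H₀.support → (D : ℝ) / 2 ≤ (deg H₀ v : ℝ)) ∧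
      (∀ v ∈ A, v ∈ H₀.support → c ≤ (deg H₀ v : ℝ)) ∧
      DegenR c H₁ ∧
      (maxDeg H₂ : ℝ) ≤ (D : ℝ) / 2 := by
  have hH : H.IsBipartiteWith A B := ⟨hdisj, hbip⟩
  have hD : (0 : ℝ) ≤ D / 2 := by positivity
  obtain ⟨H₀, H₁, H₂, h⟩ := exists_isCoreDecomposition hc.le hD H hH
  have hdeg : ∀ v ∉ B, (deg H v : ℝ) ≤ D / 2 := fun v hvB => by
    by_cases hvA : v ∈ A
    · exact hA v hvA
    · have hv : v ∉ H.support := fun hv => (isBipartiteWith_support_subset hH hv).elim hvA hvB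
      simpa [deg_eq_zero_of_notMem_support hv] using hD
  refine ⟨H₀, H₁, H₂, h.sup_eq, h.disjoint₀₁, h.disjoint₀₂, h.disjoint₁₂, h.le_deg₀_of_mem_right,
    h.le_deg₀_of_mem_left, degenR_of_isBipartiteWith (hH.mono h.le₁) hc.le h.deg₁_le,
    maxDeg_le_of_forall_deg_le hD fun v => ?_⟩
  by_cases hvB : v ∈ B
  · exact h.deg₂_le v hvB
  · exact (Nat.cast_le.2 (deg_mono h.le₂ v)).trans (hdeg v hvB)

/-- The edges of a bipartite graph H of maximum degree D whose A-side degrees are at most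
D/2 can be partitioned into H₀, H₁, H₂ so that in H₀ all B-vertices have degree ≥ D/2 and
all A-vertices have degree ≥ c, H₁ is c-degenerate, and Δ(H₂) ≤ D/2. -/
theorem stmt13 {V : Type*} [Fintype V] (H : SimpleGraph V) (A B : Set V)
    (hcover : A ∪ B = Set.univ) (hdisj : Disjoint A B)
    (hbip : ∀ u v : V, H.Adj u v → (u ∈ A ∧ v ∈ B) ∨ (u ∈ B ∧ v ∈ A))
    (D : ℕ) (hD : maxDeg H = D)
    (hA : ∀ v ∈ A, (deg H v : ℝ) ≤ (D : ℝ) / 2)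
    (c : ℝ) (hc : 0 < c) :
    ∃ H₀ H₁ H₂ : SimpleGraph V,
      H₀ ⊔ H₁ ⊔ H₂ = H ∧
      Disjoint H₀ H₁ ∧ Disjoint H₀ H₂ ∧ Disjoint H₁ H₂ ∧
      (∀ v ∈ B, v ∈ H₀.support → (D : ℝ) / 2 ≤ (deg H₀ v : ℝ)) ∧
      (∀ v ∈ A, v ∈ H₀.support → c ≤ (deg H₀ v : ℝ)) ∧
      DegenR c H₁ ∧
      (maxDeg H₂ : ℝ) ≤ (D : ℝ) / 2 :=
  stmt13_general H A B hdisj hbip D hA c hc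
end
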